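/- Let E = EuclideanSpace ℝ (Fin n), μ a Borel probability measure on E satisfying the standing integrability assumption, and u ∈ E with ‖u‖ < 1. If q ∈ E is a minimizer of G_u, then ‖ ∫_{{x : x ≠ q}} ((q − x)/‖q − x‖ − u) dμ(x) − μ({q}) • u ‖ ≤ μ({q}). In particular, if μ({q}) = 0 then ∫ ((q − x)/‖q − x‖ − u) dμ(x) = 0, where the integrand is assigned the value 0 at x = q (a μ-null point). (Euclidean case of Theorem 3.1: first-order condition for quantiles.) -/

import Mathlib

open MeasureTheory Filter Topology Classical

/-- The data-based geometric quantile loss in Euclidean space: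
`ρ_u(x,p) = ‖p − x‖ − ⟪u, p − x⟫`. -/
noncomputable def quantileLoss {n : ℕ} (u x p : EuclideanSpace ℝ (Fin n)) : ℝ :=
  ‖p - x‖ - inner ℝ u (p - x)

/-!
Assumption 2.1 amounts to `μ` having a finite first moment, so `G_u` is finite everywhere, and
each loss `p ↦ ρ_u(x, p)` is `(1 + ‖u‖)`-Lipschitz. By dominated convergence the right derivative
of `t ↦ G_u(q + t v)` at `0` is `⟪∫ ∇ρ_u(x, q) dμ, v⟫ + μ{q} ‖v‖`: for `x ≠ q` the loss is
differentiable at `q`, while the atom at `q` contributes `‖v‖ - ⟪u, v⟫`. At a minimizer this is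
nonnegative for every `v`, and `v = -∫ ∇ρ_u(x, q) dμ` gives `‖∫ ∇ρ_u(x, q) dμ‖ ≤ μ{q}`.
-/

section InnerProductSpace

variable {F : Type*} [NormedAddCommGroup F] [InnerProductSpace ℝ F]

theorem hasLineDerivAt_norm {c : F} (hc : c ≠ 0) (v : F) :
    HasLineDerivAt ℝ (‖·‖) (inner ℝ c v / ‖c‖) c v := by
  unfold HasLineDerivAt
  have hline : HasDerivAt (fun t : ℝ => c + t • v) v 0 := by
    simpa using ((hasDerivAt_id (0 : ℝ)).smul_const v).const_add c
  have hsq := hline.norm_sq.sqrt (by simpa using hc)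
  simp only [zero_smul, add_zero, Real.sqrt_sq (norm_nonneg _)] at hsq
  rwa [mul_div_mul_left _ _ two_ne_zero] at hsq

theorem norm_le_of_forall_nonneg_inner_add_mul_norm {w : F} {c : ℝ} (hc : 0 ≤ c)
    (h : ∀ v, 0 ≤ inner ℝ w v + c * ‖v‖) : ‖w‖ ≤ c := by
  have hw := h (-w)
  rw [inner_neg_right, real_inner_self_eq_norm_mul_norm, norm_neg] at hw
  rcases (norm_nonneg w).eq_or_lt with h0 | hpos
  · rwa [← h0]
  · nlinarith

end InnerProductSpace

section Integral

variable {α E : Type*} [MeasurableSpace α] {μ : Measure α}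

theorem setIntegral_compl_singleton_add [MeasurableSingletonClass α] [NormedAddCommGroup E]
    [NormedSpace ℝ E] [CompleteSpace E] {f : α → E} (hf : Integrable f μ) (a : α) :
    ∫ x in {a}ᶜ, f x ∂μ + μ.real {a} • f a = ∫ x, f x ∂μ := by
  rw [← integral_singleton, add_comm, integral_add_compl (measurableSet_singleton a) hf]

theorem tendsto_slope_integral_of_lipschitzWith [IsFiniteMeasure μ] [NormedAddCommGroup E]
    [NormedSpace ℝ E] {f : α → E → ℝ} {f' : α → ℝ} {K : NNReal} {p v : E}
    (hint : ∀ p, Integrable (fun x => f x p) μ) (hlip : ∀ x, LipschitzWith K (f x))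
    (hslope : ∀ᵐ x ∂μ,
      Tendsto (fun t : ℝ => t⁻¹ • (f x (p + t • v) - f x p)) (𝓝[>] 0) (𝓝 (f' x))) :
    Tendsto (fun t : ℝ => t⁻¹ • ((∫ x, f x (p + t • v) ∂μ) - ∫ x, f x p ∂μ)) (𝓝[>] 0)
      (𝓝 (∫ x, f' x ∂μ)) := by
  have hbound : ∀ t > (0 : ℝ), ∀ x, ‖t⁻¹ • (f x (p + t • v) - f x p)‖ ≤ K * ‖v‖ := by
    intro t ht x
    have := (hlip x).dist_le_mul (p + t • v) p
    rw [dist_eq_norm, dist_eq_norm, add_sub_cancel_left, norm_smul, Real.norm_of_nonneg ht.le]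
      at this
    rw [norm_smul, norm_inv, Real.norm_of_nonneg ht.le, inv_mul_le_iff₀ ht]
    linarith
  have hlim := tendsto_integral_filter_of_dominated_convergence (l := 𝓝[>] (0 : ℝ))
    (F := fun t x => t⁻¹ • (f x (p + t • v) - f x p)) (fun _ => (K : ℝ) * ‖v‖)
    (Eventually.of_forall fun t =>
      (((hint _).sub (hint p)).const_mul t⁻¹).aestronglyMeasurable)
    (eventually_mem_nhdsWithin.mono fun t ht => ae_of_all _ (hbound t ht))
    (integrable_const _) hslope
  refine hlim.congr fun t => ?_
  simp only [smul_eq_mul]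
  rw [integral_const_mul, integral_sub (hint _) (hint p)]

end Integral

section Quantile

variable {n : ℕ}

/-- The gradient of `quantileLoss u x` at `p ≠ x`. At `p = x` it takes the value `-u`, which makes
`∫ x, quantileGrad u x q ∂μ` equal to `∫ x in {q}ᶜ, quantileGrad u x q ∂μ - μ.real {q} • u`. -/
noncomputable def quantileGrad (u x p : EuclideanSpace ℝ (Fin n)) : EuclideanSpace ℝ (Fin n) :=
  ‖p - x‖⁻¹ • (p - x) - u

theorem one_sub_norm_mul_le_quantileLoss (u x p : EuclideanSpace ℝ (Fin n)) :
    (1 - ‖u‖) * ‖p - x‖ ≤ quantileLoss u x p := by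
  have := real_inner_le_norm u (p - x)
  rw [quantileLoss]
  linarith

theorem lipschitzWith_quantileLoss (u x : EuclideanSpace ℝ (Fin n)) :
    LipschitzWith (1 + ‖u‖₊) (quantileLoss u x) := by
  refine LipschitzWith.of_dist_le_mul fun p p' => ?_
  have hnorm := abs_norm_sub_norm_le (p - x) (p' - x)
  rw [sub_sub_sub_cancel_right] at hnorm
  have hdiff : quantileLoss u x p - quantileLoss u x p'
      = (‖p - x‖ - ‖p' - x‖) - inner ℝ u (p - p') := by
    rw [quantileLoss, quantileLoss, show p - p' = (p - x) - (p' - x) by abel,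
      inner_sub_right u (p - x)]
    ring
  rw [Real.dist_eq, dist_eq_norm, NNReal.coe_add, NNReal.coe_one, coe_nnnorm, hdiff]
  calc |(‖p - x‖ - ‖p' - x‖) - inner ℝ u (p - p')|
      ≤ |‖p - x‖ - ‖p' - x‖| + |inner ℝ u (p - p')| := abs_sub _ _
    _ ≤ ‖p - p'‖ + ‖u‖ * ‖p - p'‖ := add_le_add hnorm (abs_real_inner_le_norm u _)
    _ = (1 + ‖u‖) * ‖p - p'‖ := by ring

variable {μ : Measure (EuclideanSpace ℝ (Fin n))}

theorem integrable_id_of_integrable_quantileLoss [IsFiniteMeasure μ]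
    {u p : EuclideanSpace ℝ (Fin n)} (hu : ‖u‖ < 1)
    (hρ : Integrable (fun x => quantileLoss u x p) μ) : Integrable id μ := by
  have hsub : Integrable (fun x => p - x) μ := by
    refine (integrable_norm_iff (by fun_prop)).mp ?_
    refine (hρ.const_mul (1 - ‖u‖)⁻¹).mono' (by fun_prop) (ae_of_all _ fun x => ?_)
    rw [norm_norm, le_inv_mul_iff₀ (sub_pos.mpr hu)]
    exact one_sub_norm_mul_le_quantileLoss u x p
  refine ((integrable_const p).sub hsub).congr (ae_of_all _ fun x => ?_)
  simp

theorem integrable_quantileLoss [IsFiniteMeasure μ] (hμ : Integrable id μ)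
    (u p : EuclideanSpace ℝ (Fin n)) : Integrable (fun x => quantileLoss u x p) μ := by
  have hsub : Integrable (fun x => p - x) μ := (integrable_const p).sub hμ
  exact hsub.norm.sub (hsub.const_inner u)

theorem norm_quantileGrad_le (u x p : EuclideanSpace ℝ (Fin n)) :
    ‖quantileGrad u x p‖ ≤ 1 + ‖u‖ := by
  refine (norm_sub_le _ _).trans (add_le_add_left ?_ _)
  rw [norm_smul, norm_inv, norm_norm]
  exact inv_mul_le_one

theorem integrable_quantileGrad [IsFiniteMeasure μ] (u p : EuclideanSpace ℝ (Fin n)) :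
    Integrable (fun x => quantileGrad u x p) μ := by
  refine .of_bound ?_ (1 + ‖u‖) (ae_of_all _ fun x => norm_quantileGrad_le u x p)
  unfold quantileGrad
  fun_prop

theorem hasLineDerivAt_quantileLoss (u : EuclideanSpace ℝ (Fin n))
    {x q : EuclideanSpace ℝ (Fin n)} (hx : x ≠ q) (v : EuclideanSpace ℝ (Fin n)) :
    HasLineDerivAt ℝ (quantileLoss u x) (inner ℝ (quantileGrad u x q) v) q v := by
  have hnorm : HasDerivAt (fun t : ℝ => ‖(q - x) + t • v‖) (inner ℝ (q - x) v / ‖q - x‖) 0 :=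
    hasLineDerivAt_norm (sub_ne_zero.mpr hx.symm) v
  have hline : HasDerivAt (fun t : ℝ => (q - x) + t • v) v 0 := by
    simpa using ((hasDerivAt_id (0 : ℝ)).smul_const v).const_add (q - x)
  have hinner := (hasDerivAt_const (0 : ℝ) u).inner ℝ hline
  simp only [inner_zero_left, add_zero] at hinner
  unfold HasLineDerivAt
  convert hnorm.sub hinner using 1
  · ext t
    rw [quantileLoss, show q + t • v - x = (q - x) + t • v by abel, Pi.sub_apply]
  · rw [quantileGrad, inner_sub_left, real_inner_smul_left, div_eq_inv_mul]

theorem tendsto_slope_quantileLoss (u x q v : EuclideanSpace ℝ (Fin n)) :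
    Tendsto (fun t : ℝ => t⁻¹ • (quantileLoss u x (q + t • v) - quantileLoss u x q)) (𝓝[>] 0)
      (𝓝 (inner ℝ (quantileGrad u x q) v + ({q} : Set _).indicator (fun _ => ‖v‖) x)) := by
  by_cases hx : x = q
  · subst hx
    rw [Set.indicator_of_mem (Set.mem_singleton x), quantileGrad, sub_self, smul_zero, zero_sub,
      inner_neg_left, neg_add_eq_sub]
    refine tendsto_const_nhds.congr' (eventually_mem_nhdsWithin.mono fun t (ht : 0 < t) => ?_)
    simp only [quantileLoss, add_sub_cancel_left, sub_self, norm_zero, inner_zero_right,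
      sub_zero, norm_smul, real_inner_smul_right, Real.norm_of_nonneg ht.le, smul_eq_mul]
    field_simp
  · rw [Set.indicator_of_notMem (Set.notMem_singleton_iff.mpr hx), add_zero]
    exact (hasLineDerivAt_quantileLoss u hx v).tendsto_slope_zero_right

theorem inner_integral_quantileGrad_add_nonneg [IsFiniteMeasure μ] (hμ : Integrable id μ)
    {u q : EuclideanSpace ℝ (Fin n)}
    (hq : ∀ p, ∫ x, quantileLoss u x q ∂μ ≤ ∫ x, quantileLoss u x p ∂μ)
    (v : EuclideanSpace ℝ (Fin n)) :
    0 ≤ inner ℝ (∫ x, quantileGrad u x q ∂μ) v + μ.real {q} * ‖v‖ := by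
  have hlim := tendsto_slope_integral_of_lipschitzWith (integrable_quantileLoss hμ u)
    (lipschitzWith_quantileLoss u) (ae_of_all μ fun x => tendsto_slope_quantileLoss u x q v)
  have hnonneg := ge_of_tendsto hlim <| eventually_mem_nhdsWithin.mono fun t (ht : 0 < t) =>
    smul_nonneg (inv_nonneg.mpr ht.le) (sub_nonneg.mpr (hq _))
  have hgrad := integrable_quantileGrad (μ := μ) u q
  rwa [integral_add (hgrad.inner_const v) ((integrable_const _).indicator
    (measurableSet_singleton q)), integral_indicator_const _ (measurableSet_singleton q),
    smul_eq_mul, integral_congr_ae (ae_of_all μ fun x => real_inner_comm v _),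
    integral_inner hgrad, real_inner_comm] at hnonneg

theorem norm_integral_quantileGrad_le [IsFiniteMeasure μ] (hμ : Integrable id μ)
    {u q : EuclideanSpace ℝ (Fin n)}
    (hq : ∀ p, ∫ x, quantileLoss u x q ∂μ ≤ ∫ x, quantileLoss u x p ∂μ) :
    ‖∫ x, quantileGrad u x q ∂μ‖ ≤ μ.real {q} :=
  norm_le_of_forall_nonneg_inner_add_mul_norm measureReal_nonneg
    (inner_integral_quantileGrad_add_nonneg hμ hq)

end Quantile

theorem first_order_condition_quantile_general
    {n : ℕ} (μ : Measure (EuclideanSpace ℝ (Fin n))) [IsProbabilityMeasure μ]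
    (hμint : ∃ (u₀ p₀ : EuclideanSpace ℝ (Fin n)), ‖u₀‖ < 1 ∧
      Integrable (fun x => quantileLoss u₀ x p₀) μ)
    (u : EuclideanSpace ℝ (Fin n))
    (q : EuclideanSpace ℝ (Fin n))
    (hq : ∀ p, ∫ x, quantileLoss u x q ∂μ ≤ ∫ x, quantileLoss u x p ∂μ) :
    ‖(∫ x in {x : EuclideanSpace ℝ (Fin n) | x ≠ q},
        (‖q - x‖⁻¹ • (q - x) - u) ∂μ) - (μ {q}).toReal • u‖ ≤ (μ {q}).toReal ∧
    (μ {q} = 0 →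
      (∫ x, (if x = q then 0 else ‖q - x‖⁻¹ • (q - x) - u) ∂μ) = 0) := by
  obtain ⟨u₀, p₀, hu₀, hρ₀⟩ := hμint
  have hbound := norm_integral_quantileGrad_le
    (integrable_id_of_integrable_quantileLoss hu₀ hρ₀) hq
  have hsplit := setIntegral_compl_singleton_add (integrable_quantileGrad (μ := μ) u q) q
  have hgrad_self : quantileGrad u q q = -u := by simp [quantileGrad]
  rw [hgrad_self, smul_neg, ← sub_eq_add_neg] at hsplit
  refine ⟨hsplit ▸ hbound, fun hq0 => ?_⟩
  have hae : ∀ᵐ x ∂μ, x ≠ q := compl_mem_ae_iff.mpr hq0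
  rw [integral_congr_ae (hae.mono fun x hx => if_neg hx)]
  exact norm_le_zero_iff.mp (hbound.trans_eq (by rw [measureReal_def, hq0, ENNReal.toReal_zero]))

/-- Euclidean case of Theorem 3.1: the first-order condition at a `u`-quantile `q`:
`‖E[∇ρ_u(X,q); X ≠ q] − μ({q})·u‖ ≤ μ({q})`, and in particular if `μ({q}) = 0` then the
expected gradient vanishes (the integrand being assigned the value `0` at the null
point `x = q`). -/
theorem first_order_condition_quantile
    {n : ℕ} (μ : Measure (EuclideanSpace ℝ (Fin n))) [IsProbabilityMeasure μ]
    (hμint : ∃ (u₀ p₀ : EuclideanSpace ℝ (Fin n)), ‖u₀‖ < 1 ∧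
      Integrable (fun x => quantileLoss u₀ x p₀) μ)
    (u : EuclideanSpace ℝ (Fin n)) (hu : ‖u‖ < 1)
    (q : EuclideanSpace ℝ (Fin n))
    (hq : ∀ p, ∫ x, quantileLoss u x q ∂μ ≤ ∫ x, quantileLoss u x p ∂μ) :
    ‖(∫ x in {x : EuclideanSpace ℝ (Fin n) | x ≠ q},
        (‖q - x‖⁻¹ • (q - x) - u) ∂μ) - (μ {q}).toReal • u‖ ≤ (μ {q}).toReal ∧
    (μ {q} = 0 →
      (∫ x, (if x = q then 0 else ‖q - x‖⁻¹ • (q - x) - u) ∂μ) = 0) :=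
  first_order_condition_quantile_general μ hμint u q hq
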